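/- Fix z ∈ ℝ, constants μ, κ > 0 and a function h : ℝ → [0,∞). Then the function E ↦ W(z,E) on 2×2 real matrices is Fréchet differentiable at every E, and its derivative is the linear map A ↦ (2h(z)(μ E_d + κ E_v^+) − 2κ E_v^-) : A. -/

import Mathlib

/-!
The volumetric and deviatoric parts of a 2×2 matrix are Frobenius-orthogonal, so
`W(z,E) = h(z)(μ(|E|² - (tr E)²/2) + (κ/2)(tr E)₊²) + (κ/2)(tr E)₋²`.
This is a quadratic form in `E` plus functions of the linear functional `tr E` through
`t ↦ t₊²`, which is differentiable everywhere with derivative `2t₊`: squaring flattens the kink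
of `t₊` at the origin. The chain rule then gives the stated derivative.
-/

open Matrix

/-- Volumetric part of a 2×2 matrix: `((tr F)/2) • I`. -/
noncomputable def Mvol (F : Matrix (Fin 2) (Fin 2) ℝ) : Matrix (Fin 2) (Fin 2) ℝ :=
  (Matrix.trace F / 2) • (1 : Matrix (Fin 2) (Fin 2) ℝ)

/-- Deviatoric part of a 2×2 matrix: `F - F_v`. -/
noncomputable def Mdev (F : Matrix (Fin 2) (Fin 2) ℝ) : Matrix (Fin 2) (Fin 2) ℝ :=
  F - Mvol F

/-- Tensile volumetric part: `((tr F)_plus / 2) • I`. -/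
noncomputable def MvolP (F : Matrix (Fin 2) (Fin 2) ℝ) : Matrix (Fin 2) (Fin 2) ℝ :=
  (max (Matrix.trace F) 0 / 2) • (1 : Matrix (Fin 2) (Fin 2) ℝ)

/-- Compressive volumetric part: `((tr F)_minus / 2) • I`. -/
noncomputable def MvolM (F : Matrix (Fin 2) (Fin 2) ℝ) : Matrix (Fin 2) (Fin 2) ℝ :=
  (max (-(Matrix.trace F)) 0 / 2) • (1 : Matrix (Fin 2) (Fin 2) ℝ)

/-- Frobenius inner product `A : B := tr(Aᵀ B)`. -/
noncomputable def mInner (A B : Matrix (Fin 2) (Fin 2) ℝ) : ℝ := Matrix.trace (Aᵀ * B)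

/-- Frobenius norm. -/
noncomputable def fnorm (A : Matrix (Fin 2) (Fin 2) ℝ) : ℝ := Real.sqrt (mInner A A)

/-- Elastic energy density with tension–compression splitting:
`W(z,E) = h(z)(μ|E_d|² + κ|E_v⁺|²) + κ|E_v⁻|²`. -/
noncomputable def W (mu kappa : ℝ) (h : ℝ → ℝ) (z : ℝ)
    (E : Matrix (Fin 2) (Fin 2) ℝ) : ℝ :=
  h z * (mu * fnorm (Mdev E) ^ 2 + kappa * fnorm (MvolP E) ^ 2) +
    kappa * fnorm (MvolM E) ^ 2

/-- The stress `∂_E W(z,E) = 2h(z)(μ E_d + κ E_v⁺) - 2κ E_v⁻`. -/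
noncomputable def dW (mu kappa : ℝ) (h : ℝ → ℝ) (z : ℝ)
    (E : Matrix (Fin 2) (Fin 2) ℝ) : Matrix (Fin 2) (Fin 2) ℝ :=
  (2 * h z) • (mu • Mdev E + kappa • MvolP E) - (2 * kappa) • MvolM E

/-- The partial derivative `∂_z W(z,E) = h'(z)(μ|E_d|² + κ|E_v⁺|²)`. -/
noncomputable def dzW (mu kappa : ℝ) (h : ℝ → ℝ) (z : ℝ)
    (E : Matrix (Fin 2) (Fin 2) ℝ) : ℝ :=
  deriv h z * (mu * fnorm (Mdev E) ^ 2 + kappa * fnorm (MvolP E) ^ 2)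

attribute [local instance] Matrix.normedAddCommGroup Matrix.normedSpace

theorem hasDerivAt_max_zero_sq (s : ℝ) : HasDerivAt (fun t => max t 0 ^ 2) (2 * max s 0) s := by
  rcases lt_trichotomy s 0 with hs | rfl | hs
  · have hzero : (fun t : ℝ => max t 0 ^ 2) =ᶠ[nhds s] fun _ => 0 := by
      filter_upwards [Iio_mem_nhds hs] with t ht
      simp [max_eq_right (Set.mem_Iio.mp ht).le]
    simpa [max_eq_right hs.le] using (hasDerivAt_const s (0 : ℝ)).congr_of_eventuallyEq hzero
  · rw [hasDerivAt_iff_isLittleO_nhds_zero]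
    simp only [zero_add, max_self, ne_eq, OfNat.ofNat_ne_zero, not_false_eq_true, zero_pow,
      sub_zero, mul_zero, smul_zero]
    refine Asymptotics.IsBigO.trans_isLittleO ?_ (Asymptotics.isLittleO_pow_id one_lt_two)
    refine Asymptotics.IsBigO.of_bound 1 (Filter.Eventually.of_forall fun t => ?_)
    rw [one_mul, Real.norm_eq_abs, Real.norm_eq_abs, abs_pow, abs_pow]
    refine pow_le_pow_left₀ (abs_nonneg _) ?_ 2
    rcases le_total t 0 with ht | ht <;> simp [ht]
  · have hsq : (fun t : ℝ => max t 0 ^ 2) =ᶠ[nhds s] fun t => t ^ 2 := by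
      filter_upwards [Ioi_mem_nhds hs] with t ht
      simp [max_eq_left (Set.mem_Ioi.mp ht).le]
    simpa [max_eq_left hs.le] using (hasDerivAt_pow 2 s).congr_of_eventuallyEq hsq

theorem mInner_comm (A B : Matrix (Fin 2) (Fin 2) ℝ) : mInner A B = mInner B A := by
  rw [mInner, ← trace_transpose, transpose_mul, transpose_transpose, mInner]

theorem mInner_self_nonneg (A : Matrix (Fin 2) (Fin 2) ℝ) : 0 ≤ mInner A A := by
  simpa [mInner] using (posSemidef_conjTranspose_mul_self A).trace_nonneg

theorem fnorm_sq (A : Matrix (Fin 2) (Fin 2) ℝ) : fnorm A ^ 2 = mInner A A :=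
  Real.sq_sqrt (mInner_self_nonneg A)

theorem mInner_smul_one_left (c : ℝ) (A : Matrix (Fin 2) (Fin 2) ℝ) :
    mInner (c • 1) A = c * trace A := by
  simp [mInner, trace_smul]

theorem mInner_smul_one_self (c : ℝ) :
    mInner (c • (1 : Matrix (Fin 2) (Fin 2) ℝ)) (c • 1) = 2 * c ^ 2 := by
  simp only [mInner_smul_one_left, trace_smul, trace_one, Fintype.card_fin, Nat.cast_ofNat,
    smul_eq_mul]
  ring

theorem trace_Mdev (E : Matrix (Fin 2) (Fin 2) ℝ) : trace (Mdev E) = 0 := by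
  simp [Mdev, Mvol, trace_sub, trace_smul]

theorem mInner_Mdev_left (E A : Matrix (Fin 2) (Fin 2) ℝ) :
    mInner (Mdev E) A = mInner E A - trace E * trace A / 2 := by
  simp only [mInner, Mdev, Mvol, transpose_sub, transpose_smul, transpose_one, sub_mul,
    Algebra.smul_mul_assoc, one_mul, trace_sub, trace_smul, smul_eq_mul]
  ring

theorem mInner_Mdev_self (E : Matrix (Fin 2) (Fin 2) ℝ) :
    mInner (Mdev E) (Mdev E) = mInner E E - trace E ^ 2 / 2 := by
  rw [mInner_Mdev_left, mInner_comm, mInner_Mdev_left, trace_Mdev]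
  ring

theorem W_eq (mu kappa : ℝ) (h : ℝ → ℝ) (z : ℝ) (E : Matrix (Fin 2) (Fin 2) ℝ) :
    W mu kappa h z E =
      h z * (mu * mInner E E - mu / 2 * trace E ^ 2 + kappa / 2 * max (trace E) 0 ^ 2) +
        kappa / 2 * max (-trace E) 0 ^ 2 := by
  rw [W, fnorm_sq, fnorm_sq, fnorm_sq, mInner_Mdev_self, MvolP, MvolM, mInner_smul_one_self,
    mInner_smul_one_self]
  ring

theorem mInner_dW (mu kappa : ℝ) (h : ℝ → ℝ) (z : ℝ) (E A : Matrix (Fin 2) (Fin 2) ℝ) :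
    mInner (dW mu kappa h z E) A =
      h z * (mu * (2 * mInner E A - trace E * trace A) + kappa * max (trace E) 0 * trace A) -
        kappa * max (-trace E) 0 * trace A := by
  simp only [mInner, dW, Mdev, Mvol, MvolP, MvolM, smul_add, transpose_sub, transpose_add,
    transpose_smul, transpose_one, sub_mul, add_mul, Algebra.smul_mul_assoc, one_mul, trace_sub,
    trace_add, trace_smul, smul_eq_mul]
  ring

noncomputable def mInnerL : Matrix (Fin 2) (Fin 2) ℝ →L[ℝ] Matrix (Fin 2) (Fin 2) ℝ →L[ℝ] ℝ :=
  (LinearMap.mk₂ ℝ mInner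
    (fun A B C => by simp [mInner, transpose_add, add_mul, trace_add])
    (fun c A B => by simp [mInner, transpose_smul, trace_smul])
    (fun A B C => by simp [mInner, mul_add, trace_add])
    (fun c A B => by simp [mInner, trace_smul])).toContinuousBilinearMap

@[simp]
theorem mInnerL_apply (A B : Matrix (Fin 2) (Fin 2) ℝ) : mInnerL A B = mInner A B := rfl

/- The local sup-norm instance on matrices is a plain `def`, so `simp` and `rw` cannot match
the instances inside the derivatives below; their values are read off with `change`. -/

theorem hasFDerivAt_mInner_self (E : Matrix (Fin 2) (Fin 2) ℝ) :
    HasFDerivAt (fun A => mInner A A) ((2 : ℝ) • mInnerL E) E := by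
  refine (mInnerL.hasFDerivAt_of_bilinear (hasFDerivAt_id E) (hasFDerivAt_id E)).congr_fderiv ?_
  ext A
  change mInner E A + mInner A E = 2 * mInner E A
  rw [mInner_comm A E, two_mul]

theorem hasFDerivAt_W (mu kappa : ℝ) (h : ℝ → ℝ) (z : ℝ) (E : Matrix (Fin 2) (Fin 2) ℝ) :
    HasFDerivAt (W mu kappa h z) (mInnerL (dW mu kappa h z E)) E := by
  have htr : HasFDerivAt trace (traceLinearMap (Fin 2) ℝ ℝ).toContinuousLinearMap E :=
    (traceLinearMap (Fin 2) ℝ ℝ).toContinuousLinearMap.hasFDerivAt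
  have hpos := (hasDerivAt_max_zero_sq (trace E)).comp_hasFDerivAt E htr
  have hneg := (hasDerivAt_max_zero_sq (-trace E)).comp_hasFDerivAt E htr.neg
  have hW := ((((hasFDerivAt_mInner_self E).const_mul mu).sub ((htr.pow 2).const_mul (mu / 2))).add
    (hpos.const_mul (kappa / 2))).const_mul (h z) |>.add (hneg.const_mul (kappa / 2))
  refine (hW.congr_of_eventuallyEq (.of_forall (W_eq mu kappa h z))).congr_fderiv
    (ContinuousLinearMap.ext fun A => ?_)
  change h z * (mu * (2 * mInner E A) - mu / 2 * ((2 • trace E ^ (2 - 1)) * trace A) +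
      kappa / 2 * (2 * max (trace E) 0 * trace A)) + kappa / 2 * (2 * max (-trace E) 0 * -trace A) =
    mInner (dW mu kappa h z E) A
  rw [mInner_dW, nsmul_eq_mul, pow_one]
  ring

theorem W_hasFDerivAt_general (mu kappa : ℝ)
    (h : ℝ → ℝ) (z : ℝ) (E : Matrix (Fin 2) (Fin 2) ℝ) :
    ∃ L : Matrix (Fin 2) (Fin 2) ℝ →L[ℝ] ℝ,
      (∀ A, L A = mInner (dW mu kappa h z E) A) ∧
      HasFDerivAt (fun E' => W mu kappa h z E') L E :=
  ⟨mInnerL (dW mu kappa h z E), fun _ => rfl, hasFDerivAt_W mu kappa h z E⟩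

/-- for fixed `z`, `E ↦ W(z,E)` is Fréchet differentiable at every
`E`, with derivative the linear map `A ↦ (2h(z)(μ E_d + κ E_v⁺) - 2κ E_v⁻) : A`. -/
theorem W_hasFDerivAt (mu kappa : ℝ) (hmu : 0 < mu) (hkappa : 0 < kappa)
    (h : ℝ → ℝ) (hh : ∀ z, 0 ≤ h z) (z : ℝ) (E : Matrix (Fin 2) (Fin 2) ℝ) :
    ∃ L : Matrix (Fin 2) (Fin 2) ℝ →L[ℝ] ℝ,
      (∀ A, L A = mInner (dW mu kappa h z E) A) ∧
      HasFDerivAt (fun E' => W mu kappa h z E') L E :=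
  W_hasFDerivAt_general mu kappa h z E
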